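/- arXiv:2106.02915 — 4 statements merged into one kernel-verified Lean document; each statement's English description precedes it below -/
import Mathlib

section
/- Let σ : {0,1,…,m−1} → {1,2,…,m} be a bijection with CISS(σ) = (c_1, i_1, …, c_l, i_l), and let 𝕊_σ(λ) := [[−L_σ(λ), e_m⊗B],[e_{m−c_1}^T⊗C, D]] if c_1 > 0 and 𝕊_σ(λ) := [[−L_σ(λ), e_{m−i_1}⊗B],[e_m^T⊗C, D]] if c_1 = 0. Let λ ∈ ℂ with P(λ) invertible, and suppose H : ℂ^n → ℂ^{nm} is a linear map such that diag(H, I_r) restricts to an isomorphism from N_l(S(λ)) = { z ∈ ℂ^{n+r} : z^T S(λ) = 0 } onto N_l(𝕊_σ(λ)) = { v ∈ ℂ^{nm+r} : v^T 𝕊_σ(λ) = 0 }. Then the map y ↦ (H (C P(λ)^{-1})^T y, y) is a linear isomorphism from N_l(G(λ)) = { y ∈ ℂ^r : y^T G(λ) = 0 } onto N_l(𝕊_σ(λ)). -/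
open Matrix
open Fin.NatCast

noncomputable section

/-- The matrix polynomial `P(λ) = A_0 + λ A_1 + ⋯ + λ^m A_m` evaluated at `lam`. -/
def PEval (m n : ℕ) (A : Fin (m + 1) → Matrix (Fin n) (Fin n) ℂ) (lam : ℂ) :
    Matrix (Fin n) (Fin n) ℂ :=
  ∑ j : Fin (m + 1), lam ^ (j : ℕ) • A j

/-- `P` is regular: `det P(λ)` is not identically zero. -/
def Regular (m n : ℕ) (A : Fin (m + 1) → Matrix (Fin n) (Fin n) ℂ) : Prop :=
  ∃ lam : ℂ, (PEval m n A lam).det ≠ 0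

/-- The Fiedler matrix `M_i` of `P`, an `nm × nm` matrix indexed blockwise by `Fin m × Fin n`
(block row `0` is the top block row). -/
def FM (m n : ℕ) (A : Fin (m + 1) → Matrix (Fin n) (Fin n) ℂ) (i : ℕ) :
    Matrix (Fin m × Fin n) (Fin m × Fin n) ℂ :=
  Matrix.of fun p q =>
    (if i = 0 then
      if p.1 = q.1 then
        (if (p.1 : ℕ) = m - 1 then -A 0 else (1 : Matrix (Fin n) (Fin n) ℂ)) else 0
    else if i = m then
      if p.1 = q.1 then (if (p.1 : ℕ) = 0 then A (m : Fin (m + 1)) else 1) else 0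
    else
      if (p.1 : ℕ) = m - i - 1 ∧ (q.1 : ℕ) = m - i - 1 then -A (i : Fin (m + 1))
      else if (p.1 : ℕ) = m - i - 1 ∧ (q.1 : ℕ) = m - i then 1
      else if (p.1 : ℕ) = m - i ∧ (q.1 : ℕ) = m - i - 1 then 1
      else if (p.1 : ℕ) = m - i ∧ (q.1 : ℕ) = m - i then 0
      else if p.1 = q.1 then 1 else 0) p.2 q.2

/-- `e_j ⊗ B` (with `j` 1-indexed): the `nm × r` block column matrix with `B` in block row `j`. -/
def eB (m n r : ℕ) (j : ℕ) (B : Matrix (Fin n) (Fin r) ℂ) :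
    Matrix (Fin m × Fin n) (Fin r) ℂ :=
  Matrix.of fun p q => if (p.1 : ℕ) + 1 = j then B p.2 q else 0

/-- `e_j^T ⊗ C` (with `j` 1-indexed): the `r × nm` block row matrix with `C` in block column `j`. -/
def eC (m n r : ℕ) (j : ℕ) (C : Matrix (Fin r) (Fin n) ℂ) :
    Matrix (Fin r) (Fin m × Fin n) ℂ :=
  Matrix.of fun q p => if (p.1 : ℕ) + 1 = j then C q p.2 else 0

/-- `M_σ = M_{σ⁻¹(1)} M_{σ⁻¹(2)} ⋯ M_{σ⁻¹(m)}` (here positions are 0-indexed: `σ i` is the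
0-indexed position of the factor `M_i`). -/
def Mperm (m n : ℕ) (A : Fin (m + 1) → Matrix (Fin n) (Fin n) ℂ) (σ : Equiv.Perm (Fin m)) :
    Matrix (Fin m × Fin n) (Fin m × Fin n) ℂ :=
  (List.ofFn fun j : Fin m => FM m n A ((σ.symm j : Fin m) : ℕ)).prod

/-- The Fiedler pencil `L_σ(λ) = λ M_m − M_σ` of `P` evaluated at `lam`. -/
def LP (m n : ℕ) (A : Fin (m + 1) → Matrix (Fin n) (Fin n) ℂ) (σ : Equiv.Perm (Fin m))
    (lam : ℂ) : Matrix (Fin m × Fin n) (Fin m × Fin n) ℂ :=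
  lam • FM m n A m - Mperm m n A σ

/-- `σ` has a consecution at `d` (i.e. `σ(d) < σ(d+1)`). -/
def ConsAt (m : ℕ) (σ : Equiv.Perm (Fin m)) (d : ℕ) : Prop :=
  ∃ h : d + 1 < m, (σ ⟨d, Nat.lt_of_succ_lt h⟩ : ℕ) < (σ ⟨d + 1, h⟩ : ℕ)

/-- `σ` has an inversion at `d` (i.e. `σ(d) > σ(d+1)`). -/
def InvAt (m : ℕ) (σ : Equiv.Perm (Fin m)) (d : ℕ) : Prop :=
  ∃ h : d + 1 < m, (σ ⟨d + 1, h⟩ : ℕ) < (σ ⟨d, Nat.lt_of_succ_lt h⟩ : ℕ)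

/-- `c1` is the number of initial consecutive consecutions of `σ` (the first entry of CISS(σ)). -/
def IsC1 (m : ℕ) (σ : Equiv.Perm (Fin m)) (c1 : ℕ) : Prop :=
  (∀ d < c1, ConsAt m σ d) ∧ ¬ ConsAt m σ c1

/-- `i1` is the number of consecutive inversions of `σ` at `c1, …, c1 + i1 − 1`
(the second entry of CISS(σ)). -/
def IsI1 (m : ℕ) (σ : Equiv.Perm (Fin m)) (c1 i1 : ℕ) : Prop :=
  (∀ d, c1 ≤ d → d < c1 + i1 → InvAt m σ d) ∧ ¬ InvAt m σ (c1 + i1)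

/-- The system matrix `S(λ) = [[−P(λ), B], [C, D]]` evaluated at `lam`. -/
def SMat (m n r : ℕ) (A : Fin (m + 1) → Matrix (Fin n) (Fin n) ℂ)
    (B : Matrix (Fin n) (Fin r) ℂ) (C : Matrix (Fin r) (Fin n) ℂ) (D : Matrix (Fin r) (Fin r) ℂ)
    (lam : ℂ) : Matrix (Fin n ⊕ Fin r) (Fin n ⊕ Fin r) ℂ :=
  Matrix.fromBlocks (-(PEval m n A lam)) B C D

/-- The Fiedler pencil `𝕊_σ(λ)` of the system matrix, evaluated at `lam`:
`[[−L_σ(λ), e_m ⊗ B], [e_{m−c1}^T ⊗ C, D]]` if `c1 > 0`, and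
`[[−L_σ(λ), e_{m−i1} ⊗ B], [e_m^T ⊗ C, D]]` if `c1 = 0`. -/
def SP (m n r : ℕ) (A : Fin (m + 1) → Matrix (Fin n) (Fin n) ℂ)
    (B : Matrix (Fin n) (Fin r) ℂ) (C : Matrix (Fin r) (Fin n) ℂ) (D : Matrix (Fin r) (Fin r) ℂ)
    (σ : Equiv.Perm (Fin m)) (c1 i1 : ℕ) (lam : ℂ) :
    Matrix ((Fin m × Fin n) ⊕ Fin r) ((Fin m × Fin n) ⊕ Fin r) ℂ :=
  if 0 < c1 then
    Matrix.fromBlocks (-(LP m n A σ lam)) (eB m n r m B) (eC m n r (m - c1) C) D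
  else
    Matrix.fromBlocks (-(LP m n A σ lam)) (eB m n r (m - i1) B) (eC m n r m C) D

/-- The Fiedler matrices `𝕄_i` of the system matrix `S(λ)`. -/
def SFM (m n r : ℕ) (A : Fin (m + 1) → Matrix (Fin n) (Fin n) ℂ)
    (B : Matrix (Fin n) (Fin r) ℂ) (C : Matrix (Fin r) (Fin n) ℂ) (D : Matrix (Fin r) (Fin r) ℂ)
    (i : ℕ) : Matrix ((Fin m × Fin n) ⊕ Fin r) ((Fin m × Fin n) ⊕ Fin r) ℂ :=
  if i = 0 then Matrix.fromBlocks (FM m n A 0) (-(eB m n r m B)) (-(eC m n r m C)) (-D)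
  else if i = m then Matrix.fromBlocks (FM m n A m) 0 0 0
  else Matrix.fromBlocks (FM m n A i) 0 0 1

/-- `w = (w0, w1)` is a proper permutation of `{0, 1, …, m}`. -/
def ProperPerm (m : ℕ) (w0 w1 : List ℕ) : Prop :=
  List.Perm (w0 ++ w1) (List.range (m + 1)) ∧ 0 ∈ w0 ∧ m ∈ w1

/-- `M̂_{w0}`: the product of the Fiedler matrices of `P` in the order listed in `w0`. -/
def hatM0 (m n : ℕ) (A : Fin (m + 1) → Matrix (Fin n) (Fin n) ℂ) (w0 : List ℕ) :
    Matrix (Fin m × Fin n) (Fin m × Fin n) ℂ :=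
  (w0.map (FM m n A)).prod

/-- `M̂_{w1} = M_{i1}⁻¹ ⋯ M_{ip}⁻¹ M_m M_{j1}⁻¹ ⋯ M_{jq}⁻¹` for `w1 = (i1,…,ip,m,j1,…,jq)`. -/
def hatM1 (m n : ℕ) (A : Fin (m + 1) → Matrix (Fin n) (Fin n) ℂ) (w1 : List ℕ) :
    Matrix (Fin m × Fin n) (Fin m × Fin n) ℂ :=
  (w1.map (fun i => if i = m then FM m n A m else (FM m n A i)⁻¹)).prod

/-- The PGF pencil `K_w(λ) = λ M̂_{w1} − M̂_{w0}` of `P`, evaluated at `lam`. -/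
def KP (m n : ℕ) (A : Fin (m + 1) → Matrix (Fin n) (Fin n) ℂ) (w0 w1 : List ℕ) (lam : ℂ) :
    Matrix (Fin m × Fin n) (Fin m × Fin n) ℂ :=
  lam • hatM1 m n A w1 - hatM0 m n A w0

/-- `𝕄̂_{w0}` for the system Fiedler matrices. -/
def hatS0 (m n r : ℕ) (A : Fin (m + 1) → Matrix (Fin n) (Fin n) ℂ)
    (B : Matrix (Fin n) (Fin r) ℂ) (C : Matrix (Fin r) (Fin n) ℂ) (D : Matrix (Fin r) (Fin r) ℂ)
    (w0 : List ℕ) : Matrix ((Fin m × Fin n) ⊕ Fin r) ((Fin m × Fin n) ⊕ Fin r) ℂ :=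
  (w0.map (SFM m n r A B C D)).prod

/-- `𝕄̂_{w1}` for the system Fiedler matrices. -/
def hatS1 (m n r : ℕ) (A : Fin (m + 1) → Matrix (Fin n) (Fin n) ℂ)
    (B : Matrix (Fin n) (Fin r) ℂ) (C : Matrix (Fin r) (Fin n) ℂ) (D : Matrix (Fin r) (Fin r) ℂ)
    (w1 : List ℕ) : Matrix ((Fin m × Fin n) ⊕ Fin r) ((Fin m × Fin n) ⊕ Fin r) ℂ :=
  (w1.map (fun i => if i = m then SFM m n r A B C D m else (SFM m n r A B C D i)⁻¹)).prod

/-- The PGF pencil `𝕂_w(λ) = λ 𝕄̂_{w1} − 𝕄̂_{w0}` of `G`, evaluated at `lam`. -/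
def SKP (m n r : ℕ) (A : Fin (m + 1) → Matrix (Fin n) (Fin n) ℂ)
    (B : Matrix (Fin n) (Fin r) ℂ) (C : Matrix (Fin r) (Fin n) ℂ) (D : Matrix (Fin r) (Fin r) ℂ)
    (w0 w1 : List ℕ) (lam : ℂ) :
    Matrix ((Fin m × Fin n) ⊕ Fin r) ((Fin m × Fin n) ⊕ Fin r) ℂ :=
  lam • hatS1 m n r A B C D w1 - hatS0 m n r A B C D w0

/-- The index tuple `w` has a consecution at `d`. -/
def LCons (w : List ℕ) (d : ℕ) : Prop :=
  d ∈ w ∧ d + 1 ∈ w ∧ w.idxOf d < w.idxOf (d + 1)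

/-- The index tuple `w` has an inversion at `d`. -/
def LInv (w : List ℕ) (d : ℕ) : Prop :=
  d ∈ w ∧ d + 1 ∈ w ∧ w.idxOf (d + 1) < w.idxOf d

/-- `CIP(w) = (c0, i0)`. -/
def IsCIP (w : List ℕ) (c0 i0 : ℕ) : Prop :=
  ((∀ d < c0, LCons w d) ∧ ¬ LCons w c0) ∧ ((∀ d < i0, LInv w d) ∧ ¬ LInv w i0)

/-- Block index of an index of an `(nm+r) × (nm+r)` matrix: the first `m` (diagonal) blocks
have size `n`, the last one size `r`. -/
def sIdx (m n r : ℕ) : (Fin m × Fin n) ⊕ Fin r → ℕ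
  | Sum.inl p => p.1
  | Sum.inr _ => m

/-- An `(nm+r) × (nm+r)` matrix has block bandwidth `k` (e.g. `k = 1`: block tridiagonal,
`k = 2`: block pentadiagonal). -/
def BlockBandS (m n r : ℕ) (k : ℕ)
    (M : Matrix ((Fin m × Fin n) ⊕ Fin r) ((Fin m × Fin n) ⊕ Fin r) ℂ) : Prop :=
  ∀ x y, (sIdx m n r x + k < sIdx m n r y ∨ sIdx m n r y + k < sIdx m n r x) → M x y = 0

/-- An `nm × nm` matrix has block bandwidth `k`. -/
def BlockBandP (m n : ℕ) (k : ℕ) (M : Matrix (Fin m × Fin n) (Fin m × Fin n) ℂ) : Prop :=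
  ∀ x y : Fin m × Fin n, ((x.1 : ℕ) + k < (y.1 : ℕ) ∨ (y.1 : ℕ) + k < (x.1 : ℕ)) → M x y = 0

/-- The degree-`k` Horner shift `P_k(λ) = A_{m−k} + λ A_{m−k+1} + ⋯ + λ^k A_m`. -/
def Horner (m n : ℕ) (A : Fin (m + 1) → Matrix (Fin n) (Fin n) ℂ) (k : Fin (m + 1)) (lam : ℂ) :
    Matrix (Fin n) (Fin n) ℂ :=
  ∑ j : Fin ((k : ℕ) + 1),
    lam ^ (j : ℕ) • A ⟨m - (k : ℕ) + (j : ℕ), by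
      have h1 := j.isLt; have h2 := k.isLt; omega⟩

/-- `N_1`: the zero-degree coefficient of the first companion pencil of `P`. -/
def N1 (m n : ℕ) (A : Fin (m + 1) → Matrix (Fin n) (Fin n) ℂ) :
    Matrix (Fin m × Fin n) (Fin m × Fin n) ℂ :=
  Matrix.of fun p q =>
    (if (p.1 : ℕ) = 0 then -A ((m - 1 - (q.1 : ℕ) : ℕ) : Fin (m + 1))
     else if (p.1 : ℕ) = (q.1 : ℕ) + 1 then (1 : Matrix (Fin n) (Fin n) ℂ)
     else 0) p.2 q.2

/-- `N_2`: the zero-degree coefficient of the second companion pencil of `P`. -/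
def N2 (m n : ℕ) (A : Fin (m + 1) → Matrix (Fin n) (Fin n) ℂ) :
    Matrix (Fin m × Fin n) (Fin m × Fin n) ℂ :=
  Matrix.of fun p q =>
    (if (q.1 : ℕ) = 0 then -A ((m - 1 - (p.1 : ℕ) : ℕ) : Fin (m + 1))
     else if (q.1 : ℕ) = (p.1 : ℕ) + 1 then (1 : Matrix (Fin n) (Fin n) ℂ)
     else 0) p.2 q.2

/-- The first companion form `C_1(λ) = [[−L_1(λ), e_1 ⊗ B], [e_m^T ⊗ C, D]]` of `S`. -/
def C1P (m n r : ℕ) (A : Fin (m + 1) → Matrix (Fin n) (Fin n) ℂ)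
    (B : Matrix (Fin n) (Fin r) ℂ) (C : Matrix (Fin r) (Fin n) ℂ) (D : Matrix (Fin r) (Fin r) ℂ)
    (lam : ℂ) : Matrix ((Fin m × Fin n) ⊕ Fin r) ((Fin m × Fin n) ⊕ Fin r) ℂ :=
  Matrix.fromBlocks (-(lam • FM m n A m - N1 m n A)) (eB m n r 1 B) (eC m n r m C) D

/-- The second companion form `C_2(λ) = [[−L_2(λ), e_m ⊗ B], [e_1^T ⊗ C, D]]` of `S`. -/
def C2P (m n r : ℕ) (A : Fin (m + 1) → Matrix (Fin n) (Fin n) ℂ)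
    (B : Matrix (Fin n) (Fin r) ℂ) (C : Matrix (Fin r) (Fin n) ℂ) (D : Matrix (Fin r) (Fin r) ℂ)
    (lam : ℂ) : Matrix ((Fin m × Fin n) ⊕ Fin r) ((Fin m × Fin n) ⊕ Fin r) ℂ :=
  Matrix.fromBlocks (-(lam • FM m n A m - N2 m n A)) (eB m n r m B) (eC m n r 1 C) D

/-! Because `P(λ)` is invertible, the first block row of `zᵀ S(λ) = 0` determines the top part
of `z = (u, y)` as `u = (C P(λ)⁻¹)ᵀ y`, after which the second block row becomes
`yᵀ (C P(λ)⁻¹ B + D) = 0`: the transfer function is the Schur complement of `−P(λ)` in `S(λ)`.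
Hence `y ↦ ((C P(λ)⁻¹)ᵀ y, y)` identifies `N_l(G(λ))` with `N_l(S(λ))`, and composing with
`diag(H, I_r)` gives the isomorphism onto `N_l(𝕊_σ(λ))`. -/

section SchurComplement

variable {R ι κ : Type*} [CommRing R] [Fintype ι] [DecidableEq ι] [Fintype κ]
  {P : Matrix ι ι R} (B : Matrix ι κ R) (C : Matrix κ ι R) (D : Matrix κ κ R)

theorem fromBlocks_neg_transpose_mulVec_eq_zero_iff (hP : IsUnit P.det) (u : ι → R)
    (y : κ → R) :
    (fromBlocks (-P) B C D)ᵀ *ᵥ Sum.elim u y = 0 ↔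
      u = (C * P⁻¹)ᵀ *ᵥ y ∧ (C * P⁻¹ * B + D)ᵀ *ᵥ y = 0 := by
  have hPt : IsUnit Pᵀ.det := isUnit_det_transpose P hP
  have hu : Pᵀ *ᵥ u = Cᵀ *ᵥ y ↔ u = (C * P⁻¹)ᵀ *ᵥ y := by
    rw [transpose_mul, ← mulVec_mulVec, transpose_nonsing_inv]
    constructor
    · intro h
      rw [← h, mulVec_mulVec, nonsing_inv_mul _ hPt, one_mulVec]
    · rintro rfl
      rw [mulVec_mulVec, mul_nonsing_inv _ hPt, one_mulVec]
  rw [fromBlocks_transpose, fromBlocks_mulVec, Sum.elim_comp_inl, Sum.elim_comp_inr,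
    ← Sum.elim_zero_zero, Sum.elim_eq_iff, transpose_neg, neg_mulVec, neg_add_eq_zero, hu]
  refine and_congr_right fun hu => ?_
  rw [hu, mulVec_mulVec, ← transpose_mul, transpose_add, add_mulVec]

theorem mem_ker_transpose_fromBlocks_neg_iff (hP : IsUnit P.det) (z : ι ⊕ κ → R) :
    z ∈ LinearMap.ker (mulVecLin (fromBlocks (-P) B C D)ᵀ) ↔
      z ∘ Sum.inl = (C * P⁻¹)ᵀ *ᵥ (z ∘ Sum.inr) ∧
        z ∘ Sum.inr ∈ LinearMap.ker (mulVecLin (C * P⁻¹ * B + D)ᵀ) := by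
  rw [LinearMap.mem_ker, LinearMap.mem_ker, mulVecLin_apply, mulVecLin_apply,
    ← fromBlocks_neg_transpose_mulVec_eq_zero_iff B C D hP, Sum.elim_comp_inl_inr]

def schurLeftKernelEquiv (hP : IsUnit P.det) :
    LinearMap.ker (mulVecLin (C * P⁻¹ * B + D)ᵀ) ≃ₗ[R]
      LinearMap.ker (mulVecLin (fromBlocks (-P) B C D)ᵀ) where
  toFun y := ⟨Sum.elim ((C * P⁻¹)ᵀ *ᵥ y) y,
    (mem_ker_transpose_fromBlocks_neg_iff B C D hP _).2 ⟨rfl, y.2⟩⟩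
  invFun z := ⟨z.1 ∘ Sum.inr, ((mem_ker_transpose_fromBlocks_neg_iff B C D hP _).1 z.2).2⟩
  map_add' y y' := by ext (_ | _) <;> simp [mulVec_add]
  map_smul' c y := by ext (_ | _) <;> simp [mulVec_smul]
  left_inv y := rfl
  right_inv z := by
    ext (i | _)
    · exact (congrFun ((mem_ker_transpose_fromBlocks_neg_iff B C D hP _).1 z.2).1 i).symm
    · rfl

end SchurComplement

theorem stmt14_general (m n r : ℕ)
    (A : Fin (m + 1) → Matrix (Fin n) (Fin n) ℂ)
    (B : Matrix (Fin n) (Fin r) ℂ) (C : Matrix (Fin r) (Fin n) ℂ)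
    (D : Matrix (Fin r) (Fin r) ℂ)
    (σ : Equiv.Perm (Fin m)) (c1 i1 : ℕ)
    (lam : ℂ) (hP : IsUnit (PEval m n A lam).det)
    (H : Matrix (Fin m × Fin n) (Fin n) ℂ)
    (hH : ∃ ψ : LinearMap.ker (Matrix.mulVecLin (SMat m n r A B C D lam)ᵀ) ≃ₗ[ℂ]
        LinearMap.ker (Matrix.mulVecLin (SP m n r A B C D σ c1 i1 lam)ᵀ),
      ∀ z, (ψ z : (Fin m × Fin n) ⊕ Fin r → ℂ) =
        (Matrix.fromBlocks H 0 0 (1 : Matrix (Fin r) (Fin r) ℂ)).mulVec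
          (z : Fin n ⊕ Fin r → ℂ)) :
    ∃ φ : LinearMap.ker (Matrix.mulVecLin (C * (PEval m n A lam)⁻¹ * B + D)ᵀ) ≃ₗ[ℂ]
        LinearMap.ker (Matrix.mulVecLin (SP m n r A B C D σ c1 i1 lam)ᵀ),
      ∀ y, (φ y : (Fin m × Fin n) ⊕ Fin r → ℂ) =
        Sum.elim ((H * (C * (PEval m n A lam)⁻¹)ᵀ).mulVec (y : Fin r → ℂ))
          (y : Fin r → ℂ) := by
  obtain ⟨ψ, hψ⟩ := hH
  refine ⟨(schurLeftKernelEquiv B C D hP).trans ψ, fun y => ?_⟩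
  calc _ = fromBlocks H 0 0 1 *ᵥ Sum.elim ((C * (PEval m n A lam)⁻¹)ᵀ *ᵥ y) (y : Fin r → ℂ) :=
        hψ (schurLeftKernelEquiv B C D hP y)
    _ = _ := by simp [fromBlocks_mulVec, mulVec_mulVec]

/-- if `diag(H, I_r)` restricts to an isomorphism from `N_l(S(λ))` onto
`N_l(𝕊_σ(λ))`, then `y ↦ (H (C P(λ)⁻¹)ᵀ y, y)` is a linear isomorphism from `N_l(G(λ))`
onto `N_l(𝕊_σ(λ))`. -/
theorem stmt14 (m n r : ℕ) (hm : 2 ≤ m) (hn : 1 ≤ n) (hr : 1 ≤ r)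
    (A : Fin (m + 1) → Matrix (Fin n) (Fin n) ℂ) (hreg : Regular m n A)
    (B : Matrix (Fin n) (Fin r) ℂ) (C : Matrix (Fin r) (Fin n) ℂ)
    (D : Matrix (Fin r) (Fin r) ℂ)
    (σ : Equiv.Perm (Fin m)) (c1 i1 : ℕ) (hc1 : IsC1 m σ c1) (hi1 : IsI1 m σ c1 i1)
    (lam : ℂ) (hP : IsUnit (PEval m n A lam).det)
    (H : Matrix (Fin m × Fin n) (Fin n) ℂ)
    (hH : ∃ ψ : LinearMap.ker (Matrix.mulVecLin (SMat m n r A B C D lam)ᵀ) ≃ₗ[ℂ]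
        LinearMap.ker (Matrix.mulVecLin (SP m n r A B C D σ c1 i1 lam)ᵀ),
      ∀ z, (ψ z : (Fin m × Fin n) ⊕ Fin r → ℂ) =
        (Matrix.fromBlocks H 0 0 (1 : Matrix (Fin r) (Fin r) ℂ)).mulVec
          (z : Fin n ⊕ Fin r → ℂ)) :
    ∃ φ : LinearMap.ker (Matrix.mulVecLin (C * (PEval m n A lam)⁻¹ * B + D)ᵀ) ≃ₗ[ℂ]
        LinearMap.ker (Matrix.mulVecLin (SP m n r A B C D σ c1 i1 lam)ᵀ),
      ∀ y, (φ y : (Fin m × Fin n) ⊕ Fin r → ℂ) =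
        Sum.elim ((H * (C * (PEval m n A lam)⁻¹)ᵀ).mulVec (y : Fin r → ℂ))
          (y : Fin r → ℂ) :=
  stmt14_general m n r A B C D σ c1 i1 lam hP H hH

end
end

section
/- Let λ ∈ ℂ be such that P(λ) is invertible, and let C_1(λ) be the first companion form of S. For x ∈ ℂ^r, set w := P(λ)^{-1} B x ∈ ℂ^n and let v ∈ ℂ^{nm+r} be the block vector v = (λ^{m−1}w, λ^{m−2}w, …, λw, w, x). Then G(λ)x = 0 if and only if C_1(λ)v = 0, and the map x ↦ v is a linear isomorphism from the null space of G(λ) onto the null space of C_1(λ). -/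
open Matrix
open Fin.NatCast

noncomputable section

/-!
Write a vector of the null space of `C_1(λ)` as `(v_0, …, v_{m-1}, x)`. Block rows `2, …, m`
of `C_1(λ)v = 0` say `v_k = λ v_{k+1}`, so `(v_0, …, v_{m-1}) = (λ^{m-1}w, …, λw, w)` with
`w = v_{m-1}`. On such vectors the companion pencil collapses to the Horner evaluation
`L_1(λ)(λ^{m-1}w, …, w) = (P(λ)w, 0, …, 0)`, so the remaining block rows of `C_1(λ)v = 0` read
`P(λ)w = Bx` and `Cw + Dx = 0`, i.e. `w = P(λ)⁻¹Bx` and `G(λ)x = 0`.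
-/

section FirstCompanionForm

def firstCompanionPencil (m n : ℕ) (A : Fin (m + 1) → Matrix (Fin n) (Fin n) ℂ) (lam : ℂ) :
    Matrix (Fin m × Fin n) (Fin m × Fin n) ℂ :=
  lam • FM m n A m - N1 m n A

def blockStack (m : ℕ) {n : ℕ} (lam : ℂ) (w : Fin n → ℂ) : Fin m × Fin n → ℂ :=
  fun p => lam ^ (m - 1 - (p.1 : ℕ)) * w p.2

variable {m n : ℕ} (A : Fin (m + 1) → Matrix (Fin n) (Fin n) ℂ) (lam : ℂ)

theorem PEval_eq_smul_add_sum_rev :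
    PEval m n A lam = lam ^ m • A (m : Fin (m + 1)) +
      ∑ q : Fin m, lam ^ (m - 1 - (q : ℕ)) • A ((m - 1 - (q : ℕ) : ℕ) : Fin (m + 1)) := by
  rw [PEval, Fin.sum_univ_castSucc, add_comm, Fin.natCast_eq_last]
  congr 1
  refine Fintype.sum_equiv Fin.revPerm _ _ fun q => ?_
  have hq : m - 1 - (m - ((q : ℕ) + 1)) = q := by omega
  have hcast : ((q : ℕ) : Fin (m + 1)) = q.castSucc := Fin.ext (by simp)
  simp [hq, hcast]

theorem firstCompanionPencil_mulVec_succ (u : Fin m × Fin n → ℂ) (k : ℕ) (hk : k + 1 < m)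
    (i : Fin n) :
    (firstCompanionPencil m n A lam *ᵥ u) (⟨k + 1, hk⟩, i) =
      lam * u (⟨k + 1, hk⟩, i) - u (⟨k, by omega⟩, i) := by
  have hentry : ∀ q : Fin m × Fin n, firstCompanionPencil m n A lam (⟨k + 1, hk⟩, i) q =
      lam * (if q = (⟨k + 1, hk⟩, i) then 1 else 0) - if q = (⟨k, by omega⟩, i) then 1 else 0 := by
    rintro ⟨⟨a, ha⟩, j⟩
    have hm0 : m ≠ 0 := by omega
    simp only [firstCompanionPencil, FM, N1, Matrix.sub_apply, Matrix.smul_apply, Matrix.of_apply,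
      smul_eq_mul, hm0, if_false, if_true, Prod.mk.injEq, Fin.mk.injEq, Nat.succ_ne_zero,
      apply_ite (fun M : Matrix (Fin n) (Fin n) ℂ => M i j), Matrix.one_apply, Matrix.zero_apply]
    split_ifs <;> first | rfl | grind
  simp only [mulVec, dotProduct, hentry, sub_mul, mul_assoc, ite_mul, one_mul, zero_mul,
    Finset.sum_sub_distrib, ← Finset.mul_sum, Finset.sum_ite_eq', Finset.mem_univ, if_true]

theorem firstCompanionPencil_mulVec_zero (hm : 0 < m) (u : Fin m × Fin n → ℂ) (i : Fin n) :
    (firstCompanionPencil m n A lam *ᵥ u) (⟨0, hm⟩, i) =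
      lam * (A (m : Fin (m + 1)) *ᵥ fun j => u (⟨0, hm⟩, j)) i +
        ∑ q : Fin m, (A ((m - 1 - (q : ℕ) : ℕ) : Fin (m + 1)) *ᵥ fun j => u (q, j)) i := by
  have hentry : ∀ q : Fin m × Fin n, firstCompanionPencil m n A lam (⟨0, hm⟩, i) q =
      lam * (if q.1 = ⟨0, hm⟩ then A (m : Fin (m + 1)) i q.2 else 0) +
        A ((m - 1 - (q.1 : ℕ) : ℕ) : Fin (m + 1)) i q.2 := by
    rintro ⟨⟨a, ha⟩, j⟩
    have hm0 : m ≠ 0 := by omega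
    simp only [firstCompanionPencil, FM, N1, Matrix.sub_apply, Matrix.smul_apply, Matrix.of_apply,
      smul_eq_mul, hm0, if_false, if_true, Fin.mk.injEq,
      apply_ite (fun M : Matrix (Fin n) (Fin n) ℂ => M i j), Matrix.neg_apply, Matrix.zero_apply]
    split_ifs <;> first | rfl | grind
  simp only [mulVec, dotProduct, hentry, add_mul, mul_assoc, ite_mul, zero_mul,
    Finset.sum_add_distrib, ← Finset.mul_sum, Fintype.sum_prod_type]
  simp

theorem firstCompanionPencil_mulVec_blockStack (w : Fin n → ℂ) :
    firstCompanionPencil m n A lam *ᵥ blockStack m lam w =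
      fun p => if (p.1 : ℕ) = 0 then (PEval m n A lam *ᵥ w) p.2 else 0 := by
  have hblock : ∀ q : Fin m, (fun j => blockStack m lam w (q, j)) = lam ^ (m - 1 - (q : ℕ)) • w :=
    fun q => rfl
  ext ⟨⟨k, hk⟩, i⟩
  cases k with
  | zero =>
    have hpow : lam * lam ^ (m - 1) = lam ^ m := by rw [← pow_succ']; congr 1; omega
    rw [firstCompanionPencil_mulVec_zero A lam hk, hblock, PEval_eq_smul_add_sum_rev]
    simp only [hblock, mulVec_smul, add_mulVec, sum_mulVec, smul_mulVec, Pi.add_apply,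
      Finset.sum_apply, Pi.smul_apply, smul_eq_mul, if_true, Nat.sub_zero, ← mul_assoc, hpow]
  | succ k =>
    have hexp : m - 1 - k = m - 1 - (k + 1) + 1 := by omega
    rw [firstCompanionPencil_mulVec_succ A lam _ k hk]
    simp only [blockStack, hexp, pow_succ, Nat.succ_ne_zero, if_false]
    ring

theorem exists_eq_blockStack_of_firstCompanionPencil_mulVec (u : Fin m × Fin n → ℂ)
    (hu : ∀ p : Fin m × Fin n, (p.1 : ℕ) ≠ 0 → (firstCompanionPencil m n A lam *ᵥ u) p = 0) :
    ∃ w, u = blockStack m lam w := by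
  rcases Nat.eq_zero_or_pos m with rfl | hm
  · exact ⟨0, funext fun p => p.1.elim0⟩
  refine ⟨fun i => u (⟨m - 1, by omega⟩, i), ?_⟩
  have hpow : ∀ d k (hk : k < m) i, m - 1 - k = d →
      u (⟨k, hk⟩, i) = lam ^ d * u (⟨m - 1, by omega⟩, i) := by
    intro d
    induction d with
    | zero =>
      intro k hk i hd
      obtain rfl : k = m - 1 := by omega
      rw [pow_zero, one_mul]
    | succ d ih =>
      intro k hk i hd
      have hrow := hu (⟨k + 1, by omega⟩, i) (Nat.succ_ne_zero k)
      rw [firstCompanionPencil_mulVec_succ A lam u k (by omega), ih (k + 1) (by omega) i (by omega),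
        sub_eq_zero] at hrow
      rw [← hrow, pow_succ']
      ring
  funext ⟨⟨k, hk⟩, i⟩
  exact hpow _ k hk i rfl

end FirstCompanionForm

section SystemCompanionForm

variable {m n r : ℕ} (A : Fin (m + 1) → Matrix (Fin n) (Fin n) ℂ) (B : Matrix (Fin n) (Fin r) ℂ)
  (C : Matrix (Fin r) (Fin n) ℂ) (D : Matrix (Fin r) (Fin r) ℂ) (lam : ℂ)

theorem eB_mulVec (j : ℕ) (x : Fin r → ℂ) :
    eB m n r j B *ᵥ x = fun p => if (p.1 : ℕ) + 1 = j then (B *ᵥ x) p.2 else 0 := by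
  ext p
  by_cases hp : (p.1 : ℕ) + 1 = j <;> simp [eB, mulVec, dotProduct, hp]

theorem eC_mulVec (j : ℕ) (hj : 0 < j) (hjm : j ≤ m) (u : Fin m × Fin n → ℂ) :
    eC m n r j C *ᵥ u = C *ᵥ fun i => u (⟨j - 1, by omega⟩, i) := by
  ext s
  have hblock : ∀ q : Fin m, ((q : ℕ) + 1 = j) ↔ q = ⟨j - 1, by omega⟩ := fun q => by
    simp only [Fin.ext_iff]; omega
  simp [eC, mulVec, dotProduct, Fintype.sum_prod_type, hblock]

theorem C1P_eq_fromBlocks : C1P m n r A B C D lam =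
    fromBlocks (-firstCompanionPencil m n A lam) (eB m n r 1 B) (eC m n r m C) D := rfl

theorem C1P_mulVec_blockStack (hm : 0 < m) (w : Fin n → ℂ) (x : Fin r → ℂ) :
    C1P m n r A B C D lam *ᵥ Sum.elim (blockStack m lam w) x =
      Sum.elim (fun p => if (p.1 : ℕ) = 0 then (B *ᵥ x - PEval m n A lam *ᵥ w) p.2 else 0)
        (C *ᵥ w + D *ᵥ x) := by
  rw [C1P_eq_fromBlocks, fromBlocks_mulVec, Sum.elim_comp_inl, Sum.elim_comp_inr, neg_mulVec,
    firstCompanionPencil_mulVec_blockStack, eB_mulVec, eC_mulVec C m hm le_rfl]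
  congr 1
  · ext p
    by_cases hp : (p.1 : ℕ) = 0 <;> simp [hp, sub_eq_neg_add]
  · simp [blockStack]

variable {A lam}

theorem C1P_mulVec_eq_zero_iff (hm : 0 < m) (hP : IsUnit (PEval m n A lam).det)
    (x : Fin r → ℂ) :
    C1P m n r A B C D lam *ᵥ Sum.elim (blockStack m lam (((PEval m n A lam)⁻¹ * B) *ᵥ x)) x = 0 ↔
      (C * (PEval m n A lam)⁻¹ * B + D) *ᵥ x = 0 := by
  have hw : PEval m n A lam *ᵥ (((PEval m n A lam)⁻¹ * B) *ᵥ x) = B *ᵥ x := by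
    rw [mulVec_mulVec, ← Matrix.mul_assoc, mul_nonsing_inv _ hP, Matrix.one_mul]
  rw [C1P_mulVec_blockStack A B C D lam hm, hw, sub_self, add_mulVec, Matrix.mul_assoc,
    ← mulVec_mulVec]
  simp [funext_iff, Sum.forall]

theorem eq_blockStack_of_C1P_mulVec_eq_zero (hm : 0 < m) (hP : IsUnit (PEval m n A lam).det)
    (v : (Fin m × Fin n) ⊕ Fin r → ℂ) (hv : C1P m n r A B C D lam *ᵥ v = 0) :
    v = Sum.elim (blockStack m lam (((PEval m n A lam)⁻¹ * B) *ᵥ (v ∘ Sum.inr))) (v ∘ Sum.inr) := by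
  obtain ⟨w, hw⟩ : ∃ w, v ∘ Sum.inl = blockStack m lam w := by
    refine exists_eq_blockStack_of_firstCompanionPencil_mulVec A lam _ fun p hp => ?_
    have hrow := congrFun hv (Sum.inl p)
    simpa [C1P_eq_fromBlocks, fromBlocks_mulVec, neg_mulVec, eB_mulVec, hp] using hrow
  have hv' : v = Sum.elim (blockStack m lam w) (v ∘ Sum.inr) := by
    rw [← hw, Sum.elim_comp_inl_inr]
  rw [hv', C1P_mulVec_blockStack A B C D lam hm] at hv
  have hPw : PEval m n A lam *ᵥ w = B *ᵥ (v ∘ Sum.inr) := funext fun i => by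
    have hrow := congrFun hv (Sum.inl (⟨0, hm⟩, i))
    simp only [Sum.elim_inl, Pi.zero_apply, Pi.sub_apply] at hrow
    exact (sub_eq_zero.mp hrow).symm
  have hw' : w = ((PEval m n A lam)⁻¹ * B) *ᵥ (v ∘ Sum.inr) := by
    rw [← mulVec_mulVec, ← hPw, mulVec_mulVec, nonsing_inv_mul _ hP, one_mulVec]
  rwa [← hw']

def kerTransferEquivKerC1P (hm : 0 < m) (hP : IsUnit (PEval m n A lam).det) :
    LinearMap.ker (mulVecLin (C * (PEval m n A lam)⁻¹ * B + D)) ≃ₗ[ℂ]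
      LinearMap.ker (mulVecLin (C1P m n r A B C D lam)) where
  toFun x := ⟨Sum.elim (blockStack m lam (((PEval m n A lam)⁻¹ * B) *ᵥ (x : Fin r → ℂ))) x,
    (C1P_mulVec_eq_zero_iff B C D hm hP x).2 x.2⟩
  invFun v := ⟨(v : (Fin m × Fin n) ⊕ Fin r → ℂ) ∘ Sum.inr,
    (C1P_mulVec_eq_zero_iff B C D hm hP _).1 <|
      eq_blockStack_of_C1P_mulVec_eq_zero B C D hm hP v v.2 ▸ v.2⟩
  map_add' x y := by
    ext (p | s) <;> simp [blockStack, mulVec_add, mul_add]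
  map_smul' c x := by
    ext (p | s) <;> simp [blockStack, mulVec_smul, mul_left_comm]
  left_inv _ := rfl
  right_inv v := Subtype.ext (eq_blockStack_of_C1P_mulVec_eq_zero B C D hm hP v v.2).symm

end SystemCompanionForm

theorem stmt15_general (m n r : ℕ) (hm : 2 ≤ m)
    (A : Fin (m + 1) → Matrix (Fin n) (Fin n) ℂ)
    (B : Matrix (Fin n) (Fin r) ℂ) (C : Matrix (Fin r) (Fin n) ℂ)
    (D : Matrix (Fin r) (Fin r) ℂ)
    (lam : ℂ) (hP : IsUnit (PEval m n A lam).det) :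
    (∀ x : Fin r → ℂ,
      (C * (PEval m n A lam)⁻¹ * B + D).mulVec x = 0 ↔
        (C1P m n r A B C D lam).mulVec
          (Sum.elim
            (fun p : Fin m × Fin n =>
              lam ^ (m - 1 - (p.1 : ℕ)) * ((PEval m n A lam)⁻¹ * B).mulVec x p.2)
            x) = 0) ∧
    ∃ φ : LinearMap.ker (Matrix.mulVecLin (C * (PEval m n A lam)⁻¹ * B + D)) ≃ₗ[ℂ]
        LinearMap.ker (Matrix.mulVecLin (C1P m n r A B C D lam)),
      ∀ x, (φ x : (Fin m × Fin n) ⊕ Fin r → ℂ) =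
        Sum.elim
          (fun p : Fin m × Fin n =>
            lam ^ (m - 1 - (p.1 : ℕ)) *
              ((PEval m n A lam)⁻¹ * B).mulVec (x : Fin r → ℂ) p.2)
          (x : Fin r → ℂ) := by
  have hm0 : 0 < m := by omega
  exact ⟨fun x => (C1P_mulVec_eq_zero_iff B C D hm0 hP x).symm,
    kerTransferEquivKerC1P B C D hm0 hP, fun _ => rfl⟩

/-- with `w := P(λ)⁻¹ B x` and `v := (λ^{m−1}w, …, λw, w, x)`, we have
`G(λ)x = 0 ↔ C_1(λ)v = 0`, and `x ↦ v` is a linear isomorphism from the null space of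
`G(λ)` onto the null space of the first companion form `C_1(λ)`. -/
theorem stmt15 (m n r : ℕ) (hm : 2 ≤ m) (hn : 1 ≤ n) (hr : 1 ≤ r)
    (A : Fin (m + 1) → Matrix (Fin n) (Fin n) ℂ) (hreg : Regular m n A)
    (B : Matrix (Fin n) (Fin r) ℂ) (C : Matrix (Fin r) (Fin n) ℂ)
    (D : Matrix (Fin r) (Fin r) ℂ)
    (lam : ℂ) (hP : IsUnit (PEval m n A lam).det) :
    (∀ x : Fin r → ℂ,
      (C * (PEval m n A lam)⁻¹ * B + D).mulVec x = 0 ↔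
        (C1P m n r A B C D lam).mulVec
          (Sum.elim
            (fun p : Fin m × Fin n =>
              lam ^ (m - 1 - (p.1 : ℕ)) * ((PEval m n A lam)⁻¹ * B).mulVec x p.2)
            x) = 0) ∧
    ∃ φ : LinearMap.ker (Matrix.mulVecLin (C * (PEval m n A lam)⁻¹ * B + D)) ≃ₗ[ℂ]
        LinearMap.ker (Matrix.mulVecLin (C1P m n r A B C D lam)),
      ∀ x, (φ x : (Fin m × Fin n) ⊕ Fin r → ℂ) =
        Sum.elim
          (fun p : Fin m × Fin n =>
            lam ^ (m - 1 - (p.1 : ℕ)) *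
              ((PEval m n A lam)⁻¹ * B).mulVec (x : Fin r → ℂ) p.2)
          (x : Fin r → ℂ) :=
  stmt15_general m n r hm A B C D lam hP
end
end

section
/- Let λ ∈ ℂ be such that P(λ) is invertible, and let C_2(λ) be the second companion form of S. For y ∈ ℂ^r, set s := (C P(λ)^{-1})^T y ∈ ℂ^n and let u ∈ ℂ^{nm+r} be the block vector u = (λ^{m−1}s, λ^{m−2}s, …, λs, s, y). Then y^T G(λ) = 0 if and only if u^T C_2(λ) = 0, and the map y ↦ u is a linear isomorphism from the left null space of G(λ) onto the left null space of C_2(λ). -/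
open Matrix
open Fin.NatCast

noncomputable section

/-!
For `x = (λ^{m-1} t, …, λ t, t)` the product `xᵀ L₂(λ)` vanishes in every block column except
the first, where Horner's scheme collapses it to `tᵀ P(λ)`. Conversely, if `u = (x_1, …, x_m, y)`
satisfies `uᵀ C₂(λ) = 0`, block columns `2, …, m` say `x_{i-1} = λ x_i`, so `x` has this shape
with `t = x_m`. The first block column then reads `tᵀ P(λ) = yᵀ C`, i.e. `t = (C P(λ)⁻¹)ᵀ y`,
and the last one reads `yᵀ (C P(λ)⁻¹ B + D) = yᵀ G(λ) = 0`. Hence `y ↦ u` is injective and maps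
the left null space of `G(λ)` onto that of `C₂(λ)`.
-/

def powBlockVec {n : ℕ} (m : ℕ) (lam : ℂ) (t : Fin n → ℂ) : Fin m × Fin n → ℂ :=
  fun p => lam ^ (m - 1 - (p.1 : ℕ)) * t p.2

section SecondCompanion

-- Stated for `m = k + 1` blocks, so that block indices split by `Fin.cases` into `0` and `i.succ`.
variable {n : ℕ} (k : ℕ) (A : Fin (k + 2) → Matrix (Fin n) (Fin n) ℂ) (lam : ℂ)

theorem vecMul_secondCompanion_succ (x : Fin (k + 1) × Fin n → ℂ) (i : Fin k) (j : Fin n) :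
    vecMul x (lam • FM (k + 1) n A (k + 1) - N2 (k + 1) n A) (i.succ, j) =
      lam * x (i.succ, j) - x (i.castSucc, j) := by
  have hcast (p : Fin (k + 1)) : ((i : ℕ) = p) ↔ p = i.castSucc := by
    rw [Fin.ext_iff, eq_comm, Fin.val_castSucc]
  simp [vecMul, dotProduct, FM, N2, Fintype.sum_prod_type, Matrix.ite_apply, Matrix.one_apply,
    hcast, mul_sub, Finset.sum_sub_distrib, Fin.succ_ne_zero, mul_comm]

theorem vecMul_powBlockVec_secondCompanion_zero (t : Fin n → ℂ) (j : Fin n) :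
    vecMul (powBlockVec (k + 1) lam t) (lam • FM (k + 1) n A (k + 1) - N2 (k + 1) n A) (0, j) =
      vecMul t (PEval (k + 1) n A lam) j := by
  have hrev (i : Fin (k + 1)) : ((k - i : ℕ) : Fin (k + 2)) = i.rev.castSucc := by
    ext; simp [Fin.val_rev, Nat.mod_eq_of_lt (show k - (i : ℕ) < k + 2 by omega)]
  have hlast : ((k : Fin (k + 2)) + 1) = Fin.last (k + 1) := by
    ext; simp [Fin.val_add, Nat.mod_eq_of_lt (show k < k + 2 by omega)]
  simp only [powBlockVec, PEval, vecMul, dotProduct, FM, N2, Fintype.sum_prod_type]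
  simp only [add_tsub_cancel_right, Nat.add_eq_zero_iff, one_ne_zero, and_false, ↓reduceIte,
    Fin.val_eq_zero_iff, Nat.cast_add, Nat.cast_one, hlast, Matrix.ite_apply, Matrix.one_apply,
    Matrix.zero_apply, smul_of, hrev, Matrix.neg_apply, Matrix.sub_apply, of_apply, Pi.smul_apply,
    smul_eq_mul, mul_ite, mul_one, mul_zero, sub_neg_eq_add, mul_add, Finset.sum_add_distrib,
    Finset.sum_ite_irrel, Finset.sum_ite_eq', Finset.mem_univ, Finset.sum_const_zero,
    Fin.coe_ofNat_eq_mod, Nat.zero_mod, tsub_zero, Matrix.sum_apply, Matrix.smul_apply,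
    Finset.mul_sum]
  conv_rhs => rw [Finset.sum_comm, Fin.sum_univ_castSucc, ← Equiv.sum_comp Fin.revPerm]
  rw [add_comm]
  congr 1
  · refine Finset.sum_congr rfl fun i _ => Finset.sum_congr rfl fun x _ => ?_
    simp only [Fin.revPerm_apply, Fin.val_castSucc, Fin.val_rev, Nat.reduceSubDiff]
    ring
  · refine Finset.sum_congr rfl fun x _ => ?_
    simp only [Fin.val_last, pow_succ]
    ring

theorem vecMul_powBlockVec_secondCompanion (t : Fin n → ℂ) :
    vecMul (powBlockVec (k + 1) lam t) (lam • FM (k + 1) n A (k + 1) - N2 (k + 1) n A) =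
      fun q => if q.1 = 0 then vecMul t (PEval (k + 1) n A lam) q.2 else 0 := by
  funext ⟨q, j⟩
  induction q using Fin.cases with
  | zero => exact vecMul_powBlockVec_secondCompanion_zero k A lam t j
  | succ i =>
    rw [vecMul_secondCompanion_succ, if_neg (Fin.succ_ne_zero i)]
    simp only [powBlockVec, Fin.val_succ, Fin.val_castSucc, Nat.add_sub_cancel]
    rw [show k - (i : ℕ) = k - (i + 1) + 1 by omega, pow_succ]
    ring

theorem eq_powBlockVec_of_vecMul_secondCompanion_succ (x : Fin (k + 1) × Fin n → ℂ)
    (hx : ∀ (i : Fin k) (j : Fin n),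
      vecMul x (lam • FM (k + 1) n A (k + 1) - N2 (k + 1) n A) (i.succ, j) = 0) :
    x = powBlockVec (k + 1) lam (fun j => x (Fin.last k, j)) := by
  funext ⟨p, j⟩
  induction p using Fin.reverseInduction with
  | last => simp [powBlockVec]
  | cast i ih =>
    have h := hx i j
    rw [vecMul_secondCompanion_succ, sub_eq_zero] at h
    rw [← h, ih]
    simp only [powBlockVec, Fin.val_succ, Fin.val_castSucc, Nat.add_sub_cancel]
    rw [show k - (i : ℕ) = k - (i + 1) + 1 by omega, pow_succ]
    ring

end SecondCompanion

section Blocks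

variable {n r : ℕ} (k : ℕ)

theorem vecMul_eC_one (C : Matrix (Fin r) (Fin n) ℂ) (y : Fin r → ℂ) :
    vecMul y (eC (k + 1) n r 1 C) = fun q => if q.1 = 0 then vecMul y C q.2 else 0 := by
  funext ⟨q, j⟩
  have hq : ((q : ℕ) + 1 = 1) ↔ q = 0 := by rw [Nat.add_eq_right, Fin.val_eq_zero_iff]
  simp only [vecMul, dotProduct, eC, of_apply, hq]
  split_ifs <;> simp

theorem vecMul_eB_last (B : Matrix (Fin n) (Fin r) ℂ) (x : Fin (k + 1) × Fin n → ℂ) :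
    vecMul x (eB (k + 1) n r (k + 1) B) = vecMul (fun j => x (Fin.last k, j)) B := by
  have hp (p : Fin (k + 1)) : (p : ℕ) = k ↔ p = Fin.last k := by rw [Fin.ext_iff, Fin.val_last]
  funext l
  simp [vecMul, dotProduct, eB, Fintype.sum_prod_type, hp]

end Blocks

def leftNullLift {n r : ℕ} (m : ℕ) (lam : ℂ) (K : Matrix (Fin r) (Fin n) ℂ) :
    (Fin r → ℂ) →ₗ[ℂ] ((Fin m × Fin n) ⊕ Fin r → ℂ) where
  toFun y := Sum.elim (powBlockVec m lam (vecMul y K)) y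
  map_add' y z := by
    ext (p | j) <;> simp [powBlockVec, add_vecMul, mul_add]
  map_smul' a y := by
    ext (p | j) <;> simp [powBlockVec, smul_vecMul, mul_left_comm]

section CompanionForm

variable {n r : ℕ} (k : ℕ) (A : Fin (k + 2) → Matrix (Fin n) (Fin n) ℂ)
  (B : Matrix (Fin n) (Fin r) ℂ) (C : Matrix (Fin r) (Fin n) ℂ) (D : Matrix (Fin r) (Fin r) ℂ)
  (lam : ℂ)

theorem vecMul_C2P_sumElim_powBlockVec (t : Fin n → ℂ) (y : Fin r → ℂ) :
    vecMul (Sum.elim (powBlockVec (k + 1) lam t) y) (C2P (k + 1) n r A B C D lam) =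
      Sum.elim
        (fun q => if q.1 = 0 then vecMul y C q.2 - vecMul t (PEval (k + 1) n A lam) q.2 else 0)
        (vecMul t B + vecMul y D) := by
  rw [C2P, vecMul_fromBlocks, Sum.elim_comp_inl, Sum.elim_comp_inr, vecMul_neg,
    vecMul_powBlockVec_secondCompanion, vecMul_eC_one, vecMul_eB_last]
  congr 1
  · funext q
    by_cases hq : q.1 = 0 <;> simp [hq, neg_add_eq_sub]
  · simp [powBlockVec]

variable {k A lam}

theorem vecMul_C2P_leftNullLift (hP : IsUnit (PEval (k + 1) n A lam).det) (y : Fin r → ℂ) :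
    vecMul (leftNullLift (k + 1) lam (C * (PEval (k + 1) n A lam)⁻¹) y)
        (C2P (k + 1) n r A B C D lam) =
      Sum.elim (0 : Fin (k + 1) × Fin n → ℂ)
        (vecMul y (C * (PEval (k + 1) n A lam)⁻¹ * B + D)) := by
  have hs : vecMul (vecMul y (C * (PEval (k + 1) n A lam)⁻¹)) (PEval (k + 1) n A lam) =
      vecMul y C := by
    rw [vecMul_vecMul, Matrix.mul_assoc, nonsing_inv_mul _ hP, Matrix.mul_one]
  rw [leftNullLift, LinearMap.coe_mk, AddHom.coe_mk, vecMul_C2P_sumElim_powBlockVec, hs]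
  simp only [sub_self, ite_self, vecMul_add, vecMul_vecMul]
  rfl

theorem eq_leftNullLift_of_vecMul_C2P_eq_zero (hP : IsUnit (PEval (k + 1) n A lam).det)
    (u : (Fin (k + 1) × Fin n) ⊕ Fin r → ℂ) (hu : vecMul u (C2P (k + 1) n r A B C D lam) = 0) :
    u = leftNullLift (k + 1) lam (C * (PEval (k + 1) n A lam)⁻¹) (u ∘ Sum.inr) := by
  obtain ⟨x, y, rfl⟩ : ∃ x y, u = Sum.elim x y := ⟨_, _, (Sum.elim_comp_inl_inr u).symm⟩
  have hsucc (i : Fin k) (j : Fin n) :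
      vecMul x (lam • FM (k + 1) n A (k + 1) - N2 (k + 1) n A) (i.succ, j) = 0 := by
    have h := congrFun hu (Sum.inl (i.succ, j))
    rw [C2P, vecMul_fromBlocks, Sum.elim_comp_inl, Sum.elim_comp_inr, vecMul_neg,
      vecMul_eC_one] at h
    simpa [Fin.succ_ne_zero] using h
  have hx := eq_powBlockVec_of_vecMul_secondCompanion_succ k A lam x hsucc
  set t := fun j => x (Fin.last k, j)
  have htP : vecMul t (PEval (k + 1) n A lam) = vecMul y C := by
    funext j
    have h := congrFun hu (Sum.inl (0, j))
    rw [hx, vecMul_C2P_sumElim_powBlockVec] at h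
    simp only [Sum.elim_inl, if_true, Pi.zero_apply] at h
    exact (sub_eq_zero.mp h).symm
  have ht : t = vecMul y (C * (PEval (k + 1) n A lam)⁻¹) := by
    rw [← vecMul_vecMul, ← htP, vecMul_vecMul, mul_nonsing_inv _ hP, vecMul_one]
  rw [Sum.elim_comp_inr, hx, ht]
  rfl

theorem map_leftNullLift_ker (hP : IsUnit (PEval (k + 1) n A lam).det) :
    (LinearMap.ker (mulVecLin (C * (PEval (k + 1) n A lam)⁻¹ * B + D)ᵀ)).map
        (leftNullLift (k + 1) lam (C * (PEval (k + 1) n A lam)⁻¹)) =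
      LinearMap.ker (mulVecLin (C2P (k + 1) n r A B C D lam)ᵀ) := by
  ext u
  simp only [Submodule.mem_map, LinearMap.mem_ker, mulVecLin_apply, mulVec_transpose]
  constructor
  · rintro ⟨y, hy, rfl⟩
    rw [vecMul_C2P_leftNullLift B C D hP, hy, Sum.elim_zero_zero]
  · intro hu
    have hlift := eq_leftNullLift_of_vecMul_C2P_eq_zero B C D hP u hu
    refine ⟨u ∘ Sum.inr, ?_, hlift.symm⟩
    rw [hlift, vecMul_C2P_leftNullLift B C D hP] at hu
    simpa using congrArg (· ∘ Sum.inr) hu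

end CompanionForm

theorem stmt17_general (m n r : ℕ) (hm : 2 ≤ m)
    (A : Fin (m + 1) → Matrix (Fin n) (Fin n) ℂ)
    (B : Matrix (Fin n) (Fin r) ℂ) (C : Matrix (Fin r) (Fin n) ℂ)
    (D : Matrix (Fin r) (Fin r) ℂ)
    (lam : ℂ) (hP : IsUnit (PEval m n A lam).det) :
    (∀ y : Fin r → ℂ,
      (C * (PEval m n A lam)⁻¹ * B + D)ᵀ.mulVec y = 0 ↔
        (C2P m n r A B C D lam)ᵀ.mulVec
          (Sum.elim
            (fun p : Fin m × Fin n =>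
              lam ^ (m - 1 - (p.1 : ℕ)) * (C * (PEval m n A lam)⁻¹)ᵀ.mulVec y p.2)
            y) = 0) ∧
    ∃ φ : LinearMap.ker (Matrix.mulVecLin (C * (PEval m n A lam)⁻¹ * B + D)ᵀ) ≃ₗ[ℂ]
        LinearMap.ker (Matrix.mulVecLin (C2P m n r A B C D lam)ᵀ),
      ∀ y, (φ y : (Fin m × Fin n) ⊕ Fin r → ℂ) =
        Sum.elim
          (fun p : Fin m × Fin n =>
            lam ^ (m - 1 - (p.1 : ℕ)) *
              (C * (PEval m n A lam)⁻¹)ᵀ.mulVec (y : Fin r → ℂ) p.2)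
          (y : Fin r → ℂ) := by
  obtain ⟨k, rfl⟩ : ∃ k, m = k + 1 := ⟨m - 1, by omega⟩
  set K := C * (PEval (k + 1) n A lam)⁻¹
  have hlift (y : Fin r → ℂ) : Sum.elim (fun p : Fin (k + 1) × Fin n =>
      lam ^ (k + 1 - 1 - (p.1 : ℕ)) * Kᵀ.mulVec y p.2) y = leftNullLift (k + 1) lam K y := by
    simp only [mulVec_transpose]
    rfl
  have hinj : Function.Injective (leftNullLift (k + 1) lam K) :=
    fun y z h => congrArg (· ∘ Sum.inr) h
  refine ⟨fun y => ?_, (Submodule.equivMapOfInjective _ hinj _).trans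
    (LinearEquiv.ofEq _ _ (map_leftNullLift_ker B C D hP)), fun y => (hlift y).symm⟩
  rw [hlift, mulVec_transpose, mulVec_transpose, vecMul_C2P_leftNullLift B C D hP,
    ← Sum.elim_zero_zero, Sum.elim_eq_iff]
  simp [K]

/-- with `s := (C P(λ)⁻¹)ᵀ y` and `u := (λ^{m−1}s, …, λs, s, y)`, we have
`yᵀ G(λ) = 0 ↔ uᵀ C_2(λ) = 0`, and `y ↦ u` is a linear isomorphism from the left null
space of `G(λ)` onto the left null space of the second companion form `C_2(λ)`. -/
theorem stmt17 (m n r : ℕ) (hm : 2 ≤ m) (hn : 1 ≤ n) (hr : 1 ≤ r)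
    (A : Fin (m + 1) → Matrix (Fin n) (Fin n) ℂ) (hreg : Regular m n A)
    (B : Matrix (Fin n) (Fin r) ℂ) (C : Matrix (Fin r) (Fin n) ℂ)
    (D : Matrix (Fin r) (Fin r) ℂ)
    (lam : ℂ) (hP : IsUnit (PEval m n A lam).det) :
    (∀ y : Fin r → ℂ,
      (C * (PEval m n A lam)⁻¹ * B + D)ᵀ.mulVec y = 0 ↔
        (C2P m n r A B C D lam)ᵀ.mulVec
          (Sum.elim
            (fun p : Fin m × Fin n =>
              lam ^ (m - 1 - (p.1 : ℕ)) * (C * (PEval m n A lam)⁻¹)ᵀ.mulVec y p.2)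
            y) = 0) ∧
    ∃ φ : LinearMap.ker (Matrix.mulVecLin (C * (PEval m n A lam)⁻¹ * B + D)ᵀ) ≃ₗ[ℂ]
        LinearMap.ker (Matrix.mulVecLin (C2P m n r A B C D lam)ᵀ),
      ∀ y, (φ y : (Fin m × Fin n) ⊕ Fin r → ℂ) =
        Sum.elim
          (fun p : Fin m × Fin n =>
            lam ^ (m - 1 - (p.1 : ℕ)) *
              (C * (PEval m n A lam)⁻¹)ᵀ.mulVec (y : Fin r → ℂ) p.2)
          (y : Fin r → ℂ) :=
  stmt17_general m n r hm A B C D lam hP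

end
end

section
/- For all i, j ∈ {0, 1, …, m} with |i − j| > 1 and {i, j} ≠ {0, m}, the Fiedler matrices of the system matrix S commute: 𝕄_i 𝕄_j = 𝕄_j 𝕄_i. -/
open Matrix
open Fin.NatCast

noncomputable section

/-! Each `𝕄_i` agrees with the identity outside the block rows and columns of two blocks:
`𝕄_0` outside the last block of `P` and the `r`-block, `𝕄_m` outside the first block and the
`r`-block, and `𝕄_i` outside blocks `m - i` and `m - i + 1` (1-indexed). When these two-block
supports are disjoint, writing `𝕄_i = 1 + X`, `𝕄_j = 1 + Y` gives `XY = YX = 0`, so the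
matrices commute. -/

section IdentityOff

variable {ι R : Type*} [Fintype ι] [DecidableEq ι]

def IsIdentityOff [Zero R] [One R] (s : Set ι) (M : Matrix ι ι R) : Prop :=
  ∀ p q, p ∉ s ∨ q ∉ s → M p q = (1 : Matrix ι ι R) p q

lemma IsIdentityOff.mul_sub_one_eq_zero [Ring R] {s t : Set ι} (hst : Disjoint s t)
    {M N : Matrix ι ι R} (hM : IsIdentityOff s M) (hN : IsIdentityOff t N) :
    (M - 1) * (N - 1) = 0 := by
  ext p q
  refine Finset.sum_eq_zero fun k _ => ?_
  show (M - 1) p k * (N - 1) k q = 0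
  by_cases hk : k ∈ s
  · rw [sub_apply N, hN k q (.inl (Set.disjoint_left.mp hst hk)), sub_self, mul_zero]
  · rw [sub_apply M, hM p k (.inr hk), sub_self, zero_mul]

theorem IsIdentityOff.commute [Ring R] {s t : Set ι} (hst : Disjoint s t)
    {M N : Matrix ι ι R} (hM : IsIdentityOff s M) (hN : IsIdentityOff t N) :
    Commute M N := by
  have hMN := hM.mul_sub_one_eq_zero hst hN
  have hNM := hN.mul_sub_one_eq_zero hst.symm hM
  calc M * N = (M - 1) * (N - 1) + M + N - 1 := by noncomm_ring
    _ = (N - 1) * (M - 1) + N + M - 1 := by rw [hMN, hNM]; abel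
    _ = N * M := by noncomm_ring

end IdentityOff

/-- Blocks are numbered as by `sIdx`: `0, …, m - 1` are the blocks of `P`, `m` is the `r`-block. -/
def fiedlerBlocks (m i : ℕ) : Set ℕ :=
  if i = 0 then {m - 1, m} else if i = m then {0, m} else {m - i - 1, m - i}

lemma fiedlerBlocks_disjoint {m i j : ℕ} (hj : j ≤ m) (hij : i + 1 < j)
    (h0m : ¬(i = 0 ∧ j = m)) : Disjoint (fiedlerBlocks m i) (fiedlerBlocks m j) := by
  rw [Set.disjoint_left]
  intro x hxi hxj
  unfold fiedlerBlocks at hxi hxj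
  split_ifs at hxi hxj <;> simp only [Set.mem_insert_iff, Set.mem_singleton_iff] at hxi hxj <;>
    omega

lemma FM_isIdentityOff (m n : ℕ) (A : Fin (m + 1) → Matrix (Fin n) (Fin n) ℂ) (i : ℕ) :
    IsIdentityOff {p : Fin m × Fin n | (p.1 : ℕ) ∈ fiedlerBlocks m i} (FM m n A i) := by
  rintro ⟨⟨a, ha⟩, x⟩ ⟨⟨b, hb⟩, y⟩ h
  simp only [fiedlerBlocks, Set.mem_ofPred_eq] at h
  simp only [FM, of_apply, one_apply, Prod.mk.injEq, Fin.mk.injEq]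
  split_ifs at h ⊢ <;> simp_all [one_apply]

lemma SFM_isIdentityOff (m n r : ℕ) (A : Fin (m + 1) → Matrix (Fin n) (Fin n) ℂ)
    (B : Matrix (Fin n) (Fin r) ℂ) (C : Matrix (Fin r) (Fin n) ℂ) (D : Matrix (Fin r) (Fin r) ℂ)
    {i : ℕ} (hm : m ≠ 0) :
    IsIdentityOff (sIdx m n r ⁻¹' fiedlerBlocks m i) (SFM m n r A B C D i) := by
  rintro (p | x) (q | y) h <;> rw [← fromBlocks_one] <;> unfold SFM
  · have hFM := FM_isIdentityOff m n A i p q h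
    split_ifs <;> subst_vars <;> exact hFM
  all_goals
    split_ifs <;> subst_vars <;>
      simp_all [sIdx, fiedlerBlocks, eB, eC]
  all_goals intro; omega

theorem stmt18_general (m n r : ℕ)
    (A : Fin (m + 1) → Matrix (Fin n) (Fin n) ℂ)
    (B : Matrix (Fin n) (Fin r) ℂ) (C : Matrix (Fin r) (Fin n) ℂ)
    (D : Matrix (Fin r) (Fin r) ℂ) :
    ∀ i j : ℕ, i ≤ m → j ≤ m → (i + 1 < j ∨ j + 1 < i) →
      ¬(i = 0 ∧ j = m) → ¬(i = m ∧ j = 0) →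
      SFM m n r A B C D i * SFM m n r A B C D j =
        SFM m n r A B C D j * SFM m n r A B C D i := by
  have commute_of_lt : ∀ i j, j ≤ m → i + 1 < j → ¬(i = 0 ∧ j = m) →
      Commute (SFM m n r A B C D i) (SFM m n r A B C D j) := fun i j hj hij h0m =>
    (SFM_isIdentityOff m n r A B C D (by omega)).commute
      ((fiedlerBlocks_disjoint hj hij h0m).preimage _) (SFM_isIdentityOff m n r A B C D (by omega))
  intro i j hi hj hij h0m hm0
  rcases hij with hij | hji
  · exact commute_of_lt i j hj hij h0m
  · exact (commute_of_lt j i hi hji fun h => hm0 ⟨h.2, h.1⟩).symm.eq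

/-- for `i, j ∈ {0, 1, …, m}` with `|i − j| > 1` and `{i, j} ≠ {0, m}`, the
Fiedler matrices of the system matrix commute: `𝕄_i 𝕄_j = 𝕄_j 𝕄_i`. -/
theorem stmt18 (m n r : ℕ) (hm : 2 ≤ m) (hn : 1 ≤ n) (hr : 1 ≤ r)
    (A : Fin (m + 1) → Matrix (Fin n) (Fin n) ℂ)
    (B : Matrix (Fin n) (Fin r) ℂ) (C : Matrix (Fin r) (Fin n) ℂ)
    (D : Matrix (Fin r) (Fin r) ℂ) :
    ∀ i j : ℕ, i ≤ m → j ≤ m → (i + 1 < j ∨ j + 1 < i) →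
      ¬(i = 0 ∧ j = m) → ¬(i = m ∧ j = 0) →
      SFM m n r A B C D i * SFM m n r A B C D j =
        SFM m n r A B C D j * SFM m n r A B C D i :=
  stmt18_general m n r A B C D

end
end
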